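/- Let m ≥ 2 be an integer and let N, Δt, k*, τ̂ be positive reals and τ ∈ (0, 1). Suppose p ≥ 0 is a real number satisfying the two calibration conditions of WSINDy: (i) the real-space decay condition τ = ((2m − 1)/m²)^p, and (ii) the Fourier-space decay condition 2π k* / (N Δt) = τ̂ · √(2p + 3) / (m Δt) (equivalently, 4π² k*² m² = N² τ̂² (2p + 3)). Then m satisfies F(m) = 0, where F(m) = log((2m − 1)/m²) · (4π² k*² m² − 3 N² τ̂²) − 2 N² τ̂² log τ. -/
import Mathlib


open Real

/-- **The scalar equation for the support parameter `m` (Eq. (17)).**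
If the real-space decay condition `τ = ((2m − 1)/m²)^p` and the Fourier-space decay
condition `2π k* / (N Δt) = τ̂ √(2p + 3) / (m Δt)` hold, then `m` satisfies
`F(m) = log((2m − 1)/m²) (4π² k*² m² − 3 N² τ̂²) − 2 N² τ̂² log τ = 0`. -/
theorem wsindy_support_equation
    (m : ℕ) (hm : 2 ≤ m)
    (N Δt kstar τhat : ℝ) (hN : 0 < N) (hΔt : 0 < Δt) (hk : 0 < kstar) (hτhat : 0 < τhat)
    (τ : ℝ) (hτ0 : 0 < τ) (hτ1 : τ < 1)
    (p : ℝ) (hp : 0 ≤ p)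
    (hreal : τ = ((2 * (m : ℝ) - 1) / (m : ℝ) ^ 2) ^ p)
    (hfourier : 2 * π * kstar / (N * Δt) = τhat * Real.sqrt (2 * p + 3) / ((m : ℝ) * Δt)) :
    Real.log ((2 * (m : ℝ) - 1) / (m : ℝ) ^ 2)
        * (4 * π ^ 2 * kstar ^ 2 * (m : ℝ) ^ 2 - 3 * N ^ 2 * τhat ^ 2)
      - 2 * N ^ 2 * τhat ^ 2 * Real.log τ = 0 := by
  have hm2 : (2 : ℝ) ≤ (m : ℝ) := by exact_mod_cast hm
  have hmpos : (0 : ℝ) < (m : ℝ) := by linarith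
  have hb : (0 : ℝ) < (2 * (m : ℝ) - 1) / (m : ℝ) ^ 2 := div_pos (by linarith) (by positivity)
  have hlogτ : Real.log τ = p * Real.log ((2 * (m : ℝ) - 1) / (m : ℝ) ^ 2) := by
    rw [hreal, Real.log_rpow hb]
  have hs : Real.sqrt (2 * p + 3) = 2 * π * kstar * (m : ℝ) / (N * τhat) := by
    field_simp at hfourier
    have hND : N * Δt ≠ 0 := by positivity
    field_simp
    nlinarith [hfourier]
  have hsq : 2 * p + 3 = (2 * π * kstar * (m : ℝ) / (N * τhat)) ^ 2 := by
    rw [← hs, Real.sq_sqrt (by linarith)]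
  have hkey : 4 * π ^ 2 * kstar ^ 2 * (m : ℝ) ^ 2 - 3 * N ^ 2 * τhat ^ 2
      = 2 * p * (N ^ 2 * τhat ^ 2) := by
    have hNτ : (N * τhat) ≠ 0 := by positivity
    field_simp at hsq
    nlinarith [hsq]
  rw [hlogτ, hkey]; ring
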